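/- arXiv:1105.5903 — 4 statements merged into one kernel-verified Lean document; each statement's English description precedes it below -/
import Mathlib

section
/- Fix m* ∈ F_2^k of Hamming weight u and c* ∈ F_2^n of Hamming weight v. The number of graphs G in the ensemble G_{k,n} (injective labelings of n edges into unordered pairs of k vertices) whose incidence matrix satisfies m* M(G) = c* equals v! (n-v)! C(u(k-u), v) C(C(k,2) - u(k-u), n-v). -/
open scoped Classical

noncomputable section

/-- Incidence matrix over F_2 of an edge labeling `e`. -/
def inc {k n : ℕ} (e : Fin n → Sym2 (Fin k)) : Matrix (Fin k) (Fin n) (ZMod 2) :=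
  Matrix.of fun i j => if i ∈ e j then 1 else 0

/-- Hamming weight of a binary vector. -/
def wt {d : ℕ} (x : Fin d → ZMod 2) : ℕ := (Finset.univ.filter fun i => x i ≠ 0).card

/-- `e` is a valid member of the ensemble `G_{k,n}`: an injective labeling of
edges by unordered pairs of distinct vertices. -/
def IsGraph {k n : ℕ} (e : Fin n → Sym2 (Fin k)) : Prop :=
  Function.Injective e ∧ ∀ j, ¬ (e j).IsDiag

/-- The simple graph determined by the edge labeling. -/
def toGraph {k n : ℕ} (e : Fin n → Sym2 (Fin k)) : SimpleGraph (Fin k) :=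
  SimpleGraph.fromEdgeSet (Set.range e)

/-- The ensemble `G_{k,n}`. -/
def Ens (k n : ℕ) := {e : Fin n → Sym2 (Fin k) // IsGraph e}

instance (k n : ℕ) : Fintype (Ens k n) := Subtype.fintype _

/-- The unordered pair `s` crosses the cut `(V1, V1ᶜ)`. -/
def crosses {k : ℕ} (V1 : Finset (Fin k)) (s : Sym2 (Fin k)) : Prop :=
  ∃ a b, s = s(a, b) ∧ a ∈ V1 ∧ b ∉ V1

/-- `E'` is a cut-set of the graph given by `e`. -/
def IsCutSet {k n : ℕ} (e : Fin n → Sym2 (Fin k)) (E' : Finset (Fin n)) : Prop :=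
  ∃ V1 : Finset (Fin k), E' = Finset.univ.filter fun j => crosses V1 (e j)

/-- Cut-set weight distribution `B_v(G)`. -/
def Bv {k n : ℕ} (e : Fin n → Sym2 (Fin k)) (v : ℕ) : ℕ :=
  Nat.card {E' : Finset (Fin n) // IsCutSet e E' ∧ E'.card = v}

/-- Input–output weight distribution `A_{u,v}(G)`. -/
def Auv {k n : ℕ} (e : Fin n → Sym2 (Fin k)) (u v : ℕ) : ℕ :=
  Nat.card {p : (Fin k → ZMod 2) × (Fin n → ZMod 2) //
    wt p.1 = u ∧ wt p.2 = v ∧ Matrix.vecMul p.1 (inc e) = p.2}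

/-- Survivor subgraph after the edges in `E'` fail. -/
def survivor {k n : ℕ} (e : Fin n → Sym2 (Fin k)) (E' : Finset (Fin n)) : SimpleGraph (Fin k) :=
  SimpleGraph.fromEdgeSet (e '' {j | j ∉ E'})

/-- Network failure probability of a connected graph. -/
def Pf {k n : ℕ} (e : Fin n → Sym2 (Fin k)) (ε : ℝ) : ℝ :=
  ∑ E' : Finset (Fin n),
    (if ¬ (survivor e E').Connected then ε ^ E'.card * (1 - ε) ^ (n - E'.card) else 0)

/-- Network failure probability, equal to 1 for unconnected graphs. -/
def PfFull {k n : ℕ} (e : Fin n → Sym2 (Fin k)) (ε : ℝ) : ℝ :=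
  if (toGraph e).Connected then Pf e ε else 1

/-- Size `T(G)` of the left kernel of the incidence matrix. -/
def TG {k n : ℕ} (e : Fin n → Sym2 (Fin k)) : ℕ :=
  Nat.card {m : Fin k → ZMod 2 // Matrix.vecMul m (inc e) = 0}

/-- Probability that a uniformly random graph of the ensemble is unconnected. -/
def PU (k n : ℕ) : ℝ :=
  (Nat.card {G : Ens k n // ¬ (toGraph G.1).Connected} : ℝ) / Nat.card (Ens k n)
/-!
Column `j` of `m M(G)` is `m a + m b` for the edge `s(a, b)` labelled `j`, so `m M(G) = c` says
exactly that the `v` edges in the support of `c` receive distinct pairs crossing between the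
support of `m` and its complement (there are `u (k - u)` such pairs), and the other `n - v` edges
receive distinct non-crossing pairs (`C(k, 2) - u (k - u)` of them). The two choices are
independent, so the count is a product of two falling factorials.
-/

section FiberwiseEmbedding

variable {α β γ : Type*}

def Function.Embedding.fiberwiseEquiv (g : β → γ) (h : α → γ) :
    {f : α ↪ β // ∀ a, g (f a) = h a} ≃ ((y : γ) → ({a // h a = y} ↪ {b // g b = y})) where
  toFun f y := ⟨fun a => ⟨f.1 a, (f.2 a).trans a.2⟩, fun a a' haa' =>
    Subtype.ext (f.1.injective (congrArg Subtype.val haa'))⟩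
  invFun F := by
    refine ⟨⟨fun a => (F (h a) ⟨a, rfl⟩).1, fun a a' haa' => ?_⟩, fun a => (F (h a) ⟨a, rfl⟩).2⟩
    have key : ∀ y y' (x : {a // h a = y}) (x' : {a // h a = y'}),
        (F y x).1 = (F y' x').1 → x.1 = x'.1 := by
      intro y y' x x' hxx'
      obtain rfl : y = y' := (F y x).2.symm.trans ((congrArg g hxx').trans (F y' x').2)
      exact congrArg Subtype.val ((F y).injective (Subtype.ext hxx'))
    exact key _ _ ⟨a, rfl⟩ ⟨a', rfl⟩ haa'
  left_inv _ := rfl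
  right_inv F := by
    funext y
    ext ⟨a, rfl⟩
    rfl

theorem Function.Embedding.card_fiberwise [Fintype α] [Fintype β] [Fintype γ]
    (g : β → γ) (h : α → γ) :
    Nat.card {f : α ↪ β // ∀ a, g (f a) = h a} =
      ∏ y, (Nat.card {b // g b = y}).descFactorial (Nat.card {a // h a = y}) := by
  rw [Nat.card_congr (Function.Embedding.fiberwiseEquiv g h), Nat.card_pi]
  simp only [Nat.card_eq_fintype_card, Fintype.card_embedding_eq]

end FiberwiseEmbedding

theorem ZMod.two_eq_zero_iff_ne_one (x : ZMod 2) : x = 0 ↔ x ≠ 1 := by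
  revert x; decide

theorem ZMod.two_ne_zero_iff_eq_one (x : ZMod 2) : x ≠ 0 ↔ x = 1 := by
  revert x; decide

theorem card_eq_one_eq_wt {d : ℕ} (x : Fin d → ZMod 2) : Nat.card {i // x i = 1} = wt x := by
  simp only [wt, ZMod.two_ne_zero_iff_eq_one, Nat.card_eq_fintype_card, Fintype.card_subtype]

theorem card_eq_zero_eq_sub_card_eq_one {ι : Type*} [Fintype ι] (x : ι → ZMod 2) :
    Nat.card {i // x i = 0} = Nat.card ι - Nat.card {i // x i = 1} := by
  rw [Nat.card_congr (Equiv.subtypeEquivRight fun i => ZMod.two_eq_zero_iff_ne_one (x i))]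
  simp only [Nat.card_eq_fintype_card, Fintype.card_subtype_compl]

def edgeParity {α : Type*} (m : α → ZMod 2) : Sym2 α → ZMod 2 :=
  Sym2.lift ⟨fun a b => m a + m b, fun _ _ => add_comm _ _⟩

theorem vecMul_inc_apply {k n : ℕ} (m : Fin k → ZMod 2) (e : Fin n → Sym2 (Fin k)) {j : Fin n}
    (hj : ¬ (e j).IsDiag) : Matrix.vecMul m (inc e) j = edgeParity m (e j) := by
  simp only [Matrix.vecMul, dotProduct, inc, Matrix.of_apply, mul_ite, mul_one, mul_zero]
  generalize e j = s at hj
  induction s using Sym2.inductionOn with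
  | hf a b =>
    have hab : a ≠ b := by simpa using hj
    rw [Fintype.sum_eq_add a b hab fun i hi => if_neg (by simpa [Sym2.mem_iff] using hi)]
    simp [edgeParity]

def solutionsEquiv {k n : ℕ} (m : Fin k → ZMod 2) (c : Fin n → ZMod 2) :
    {e : Fin n → Sym2 (Fin k) // IsGraph e ∧ Matrix.vecMul m (inc e) = c} ≃
      {f : Fin n ↪ {s : Sym2 (Fin k) // ¬ s.IsDiag} // ∀ j, edgeParity m (f j) = c j} where
  toFun e := ⟨⟨fun j => ⟨e.1 j, e.2.1.2 j⟩, fun _ _ h => e.2.1.1 (congrArg Subtype.val h)⟩,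
    fun j => (vecMul_inc_apply m e.1 (e.2.1.2 j)).symm.trans (congrFun e.2.2 j)⟩
  invFun f := ⟨fun j => (f.1 j).1, ⟨Subtype.val_injective.comp f.1.injective, fun j => (f.1 j).2⟩,
    funext fun j => (vecMul_inc_apply m _ (f.1 j).2).trans (f.2 j)⟩
  left_inv _ := rfl
  right_inv _ := rfl

section CutEdges

variable {α : Type*} (m : α → ZMod 2)

def crossingEquiv :
    {a // m a = 1} × {b // m b = 0} ≃ {s : {s : Sym2 α // ¬ s.IsDiag} // edgeParity m s = 1} := by
  refine Equiv.ofBijective (fun p => ⟨⟨s(p.1, p.2), ?_⟩, ?_⟩) ⟨?_, ?_⟩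
  · exact fun hd => zero_ne_one ((Sym2.mk_isDiag_iff.1 hd ▸ p.2.2).symm.trans p.1.2)
  · simp [edgeParity, p.1.2, p.2.2]
  · rintro ⟨⟨a, ha⟩, ⟨b, hb⟩⟩ ⟨⟨a', ha'⟩, ⟨b', hb'⟩⟩ h
    rcases Sym2.eq_iff.1 (congrArg Subtype.val (congrArg Subtype.val h)) with
      ⟨rfl, rfl⟩ | ⟨rfl, -⟩
    · rfl
    · exact absurd (ha.symm.trans hb') zero_ne_one.symm
  · rintro ⟨⟨s, hs⟩, hs1⟩
    induction s using Sym2.inductionOn with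
    | hf a b =>
      have hsum : ∀ x y : ZMod 2, x + y = 1 → x = 1 ∧ y = 0 ∨ x = 0 ∧ y = 1 := by decide
      rcases hsum (m a) (m b) hs1 with ⟨ha, hb⟩ | ⟨ha, hb⟩
      · exact ⟨(⟨a, ha⟩, ⟨b, hb⟩), rfl⟩
      · exact ⟨(⟨b, hb⟩, ⟨a, ha⟩), Subtype.ext (Subtype.ext Sym2.eq_swap)⟩

variable [Fintype α]

theorem card_crossing :
    Nat.card {s : {s : Sym2 α // ¬ s.IsDiag} // edgeParity m s = 1} =
      Nat.card {a // m a = 1} * (Nat.card α - Nat.card {a // m a = 1}) := by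
  rw [← Nat.card_congr (crossingEquiv m), Nat.card_prod, card_eq_zero_eq_sub_card_eq_one]

theorem card_noncrossing :
    Nat.card {s : {s : Sym2 α // ¬ s.IsDiag} // edgeParity m s = 0} =
      (Nat.card α).choose 2 - Nat.card {a // m a = 1} * (Nat.card α - Nat.card {a // m a = 1}) := by
  rw [card_eq_zero_eq_sub_card_eq_one, card_crossing,
    Nat.card_eq_fintype_card (α := {s : Sym2 α // _}), Sym2.card_subtype_not_diag,
    ← Nat.card_eq_fintype_card]

end CutEdges

theorem stmt5 (k n u v : ℕ) (m : Fin k → ZMod 2) (c : Fin n → ZMod 2)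
    (hu : wt m = u) (hv : wt c = v) :
    Nat.card {e : Fin n → Sym2 (Fin k) // IsGraph e ∧ Matrix.vecMul m (inc e) = c}
      = v.factorial * (n - v).factorial * (u * (k - u)).choose v
          * (k.choose 2 - u * (k - u)).choose (n - v) := by
  subst hu hv
  rw [Nat.card_congr (solutionsEquiv m c),
    Function.Embedding.card_fiberwise
      (fun s : {s : Sym2 (Fin k) // ¬ s.IsDiag} => edgeParity m s) c,
    Fintype.prod_eq_mul 0 1 zero_ne_one
      fun x hx => absurd ((ZMod.two_eq_zero_iff_ne_one x).2 hx.2) hx.1,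
    card_noncrossing, card_crossing, card_eq_zero_eq_sub_card_eq_one c, card_eq_one_eq_wt,
    card_eq_one_eq_wt, Nat.card_fin, Nat.card_fin,
    Nat.descFactorial_eq_factorial_mul_choose, Nat.descFactorial_eq_factorial_mul_choose]
  ring
end
end

section
/- The probability P_U(k,n) that a uniformly random graph from the ensemble G_{k,n} is unconnected satisfies P_U(k,n) ≤ (1/2) Σ_{u=0}^{k} C(k,u) C(C(k,2) - u(k-u), n) / C(C(k,2), n) - 1. -/
open scoped Classical

noncomputable section

/-!
Call `U ⊆ V` cut-free for `G` if no edge of `G` joins `U` to `Uᶜ`, and count the pairs `(G, U)` with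
`U` cut-free for `G` in two ways. For fixed `U` with `#U = u`, the cut-free graphs are the injective
labelings by the `C(k,2) - u(k-u)` pairs not crossing `U`, so there are `(C(k,2) - u(k-u))_n`
(falling factorial) of them. For fixed `G`, the sets `∅` and `V` are cut-free, and if `G` is
disconnected so are a connected component and its complement. Hence
`2 |G_{k,n}| + 2 #{disconnected G} ≤ ∑_u C(k,u) (C(k,2) - u(k-u))_n`, and dividing by
`|G_{k,n}| = (C(k,2))_n` gives the bound, as `(m)_n / (M)_n = C(m,n) / C(M,n)`.
-/

open Finset

section

variable {k n : ℕ}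

def IsCutFree (e : Fin n → Sym2 (Fin k)) (U : Finset (Fin k)) : Prop :=
  ∀ j, ¬ crosses U (e j)

lemma crosses_of_crosses_compl {U : Finset (Fin k)} {s : Sym2 (Fin k)} (h : crosses Uᶜ s) :
    crosses U s := by
  obtain ⟨a, b, rfl, ha, hb⟩ := h
  exact ⟨b, a, Sym2.eq_swap, by simpa using hb, by simpa using ha⟩

lemma not_isDiag_of_crosses {U : Finset (Fin k)} {s : Sym2 (Fin k)} (h : crosses U s) :
    ¬ s.IsDiag := by
  obtain ⟨a, b, rfl, ha, hb⟩ := h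
  rw [Sym2.mk_isDiag_iff]
  rintro rfl
  exact hb ha

lemma isCutFree_empty (e : Fin n → Sym2 (Fin k)) : IsCutFree e ∅ := by
  rintro j ⟨a, b, -, ha, -⟩
  simp at ha

lemma isCutFree_univ (e : Fin n → Sym2 (Fin k)) : IsCutFree e univ := by
  rintro j ⟨a, b, -, -, hb⟩
  simp at hb

lemma IsCutFree.compl {e : Fin n → Sym2 (Fin k)} {U : Finset (Fin k)} (h : IsCutFree e U) :
    IsCutFree e Uᶜ :=
  fun j hj => h j (crosses_of_crosses_compl hj)

lemma card_filter_crosses (U : Finset (Fin k)) :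
    #(univ.filter fun s : Sym2 (Fin k) => crosses U s) = #U * (k - #U) := by
  have himage : (univ.filter fun s : Sym2 (Fin k) => crosses U s)
      = (U ×ˢ Uᶜ).image fun p => s(p.1, p.2) := by
    ext s
    simp only [mem_filter, mem_univ, true_and, mem_image, mem_product, mem_compl]
    constructor
    · rintro ⟨a, b, rfl, ha, hb⟩
      exact ⟨(a, b), ⟨ha, hb⟩, rfl⟩
    · rintro ⟨⟨a, b⟩, ⟨ha, hb⟩, rfl⟩
      exact ⟨a, b, rfl, ha, hb⟩
  rw [himage, card_image_of_injOn, card_product, card_compl, Fintype.card_fin]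
  rintro ⟨a, b⟩ hab ⟨c, d⟩ hcd h
  simp only [coe_product, Set.mem_prod, mem_coe, coe_compl, Set.mem_compl_iff] at hab hcd
  rcases Sym2.eq_iff.1 h with ⟨rfl, rfl⟩ | ⟨rfl, rfl⟩
  · rfl
  · exact absurd hab.1 hcd.2

lemma card_not_isDiag_not_crosses (U : Finset (Fin k)) :
    Fintype.card {s : Sym2 (Fin k) // ¬ s.IsDiag ∧ ¬ crosses U s}
      = k.choose 2 - #U * (k - #U) := by
  have hnondiag : #(univ.filter fun s : Sym2 (Fin k) => ¬ s.IsDiag) = k.choose 2 := by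
    rw [← Fintype.card_subtype, Sym2.card_subtype_not_diag, Fintype.card_fin]
  have hsub : (univ.filter fun s : Sym2 (Fin k) => crosses U s)
      ⊆ univ.filter fun s => ¬ s.IsDiag := by
    intro s hs
    simp only [mem_filter, mem_univ, true_and] at hs ⊢
    exact not_isDiag_of_crosses hs
  rw [Fintype.card_subtype, ← hnondiag, ← card_filter_crosses U, ← card_sdiff_of_subset hsub]
  congr 1
  ext s
  simp

def cutFreeEquivEmbedding (U : Finset (Fin k)) :
    {G : Ens k n // IsCutFree G.1 U} ≃ (Fin n ↪ {s : Sym2 (Fin k) // ¬ s.IsDiag ∧ ¬ crosses U s})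
    where
  toFun G := ⟨fun j => ⟨G.1.1 j, G.1.2.2 j, G.2 j⟩,
    fun _ _ h => G.1.2.1 (congrArg Subtype.val h)⟩
  invFun f := ⟨⟨fun j => (f j).1, fun _ _ h => f.injective (Subtype.ext h),
    fun j => (f j).2.1⟩, fun j => (f j).2.2⟩
  left_inv _ := rfl
  right_inv _ := rfl

lemma card_filter_isCutFree (U : Finset (Fin k)) :
    #(univ.filter fun G : Ens k n => IsCutFree G.1 U)
      = (k.choose 2 - #U * (k - #U)).descFactorial n := by
  rw [← Fintype.card_subtype, Fintype.card_congr (cutFreeEquivEmbedding U),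
    Fintype.card_embedding_eq, Fintype.card_fin, card_not_isDiag_not_crosses]

lemma card_ens : Fintype.card (Ens k n) = (k.choose 2).descFactorial n := by
  simpa [isCutFree_empty] using card_filter_isCutFree (k := k) (n := n) ∅

lemma card_empty_univ_compl {α : Type*} [Fintype α] [DecidableEq α] {U : Finset α}
    (hU : U.Nonempty) (hUc : Uᶜ.Nonempty) : #({∅, univ, U, Uᶜ} : Finset (Finset α)) = 4 := by
  obtain ⟨a, ha⟩ := hU
  obtain ⟨b, hb⟩ := hUc
  rw [card_insert_of_notMem, card_insert_of_notMem, card_pair]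
  · exact fun h => mem_compl.1 (h ▸ ha) ha
  · simp only [mem_insert, mem_singleton, not_or]
    exact ⟨fun h => mem_compl.1 hb (h ▸ mem_univ b), fun h => mem_compl.1 (h ▸ mem_univ a) ha⟩
  · simp only [mem_insert, mem_singleton, not_or]
    exact ⟨fun h => notMem_empty a (h ▸ mem_univ a), fun h => notMem_empty a (h ▸ ha),
      fun h => notMem_empty b (h ▸ hb)⟩

lemma two_le_card_isCutFree (hk : 0 < k) (e : Fin n → Sym2 (Fin k)) :
    2 ≤ #(univ.filter fun U : Finset (Fin k) => IsCutFree e U) := by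
  have : Nonempty (Fin k) := ⟨⟨0, hk⟩⟩
  calc 2 = #({∅, univ} : Finset (Finset (Fin k))) :=
        (card_pair (univ_neq_empty (Fin k)).symm).symm
    _ ≤ _ := card_le_card (by simp [insert_subset_iff, isCutFree_empty, isCutFree_univ])

lemma isCutFree_filter_reachable (e : Fin n → Sym2 (Fin k)) (v : Fin k) :
    IsCutFree e (univ.filter ((toGraph e).Reachable v)) := by
  rintro j ⟨a, b, hab, ha, hb⟩
  have hadj : (toGraph e).Adj a b := by
    rw [toGraph, SimpleGraph.fromEdgeSet_adj]
    exact ⟨hab ▸ ⟨j, rfl⟩, fun h => hb (h ▸ ha)⟩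
  simp only [mem_filter, mem_univ, true_and] at ha hb
  exact hb (ha.trans hadj.reachable)

lemma four_le_card_isCutFree {e : Fin n → Sym2 (Fin k)} (hk : 0 < k)
    (h : ¬ (toGraph e).Connected) :
    4 ≤ #(univ.filter fun U : Finset (Fin k) => IsCutFree e U) := by
  have : Nonempty (Fin k) := ⟨⟨0, hk⟩⟩
  obtain ⟨a, b, hab⟩ : ∃ a b, ¬ (toGraph e).Reachable a b := by
    simpa [SimpleGraph.connected_iff, SimpleGraph.Preconnected] using h
  set U := univ.filter ((toGraph e).Reachable a)
  have hU : U.Nonempty := ⟨a, by simp [U]⟩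
  have hUc : Uᶜ.Nonempty := ⟨b, by simpa [U] using hab⟩
  have hcut := isCutFree_filter_reachable e a
  calc 4 = #({∅, univ, U, Uᶜ} : Finset (Finset (Fin k))) := (card_empty_univ_compl hU hUc).symm
    _ ≤ _ := by
      refine card_le_card ?_
      simp only [insert_subset_iff, singleton_subset_iff, mem_filter, mem_univ, true_and]
      exact ⟨isCutFree_empty e, isCutFree_univ e, hcut, hcut.compl⟩

lemma two_mul_card_ens_add_two_mul_card_disconnected_le (hk : 0 < k) :
    2 * Fintype.card (Ens k n) + 2 * #(univ.filter fun G : Ens k n => ¬ (toGraph G.1).Connected)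
      ≤ ∑ u ∈ range (k + 1), k.choose u * (k.choose 2 - u * (k - u)).descFactorial n := by
  have hlower (G : Ens k n) : 2 + (if (toGraph G.1).Connected then 0 else 2)
      ≤ #(univ.filter fun U : Finset (Fin k) => IsCutFree G.1 U) := by
    split_ifs with h
    · exact two_le_card_isCutFree hk G.1
    · exact four_le_card_isCutFree hk h
  calc 2 * Fintype.card (Ens k n) + 2 * #(univ.filter fun G : Ens k n => ¬ (toGraph G.1).Connected)
      = ∑ G : Ens k n, (2 + if (toGraph G.1).Connected then 0 else 2) := by
        rw [sum_add_distrib, sum_ite, sum_const_zero, sum_const, sum_const, card_univ]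
        simp only [smul_eq_mul]
        ring
    _ ≤ ∑ G : Ens k n, #(univ.filter fun U : Finset (Fin k) => IsCutFree G.1 U) :=
        sum_le_sum fun G _ => hlower G
    _ = ∑ U : Finset (Fin k), #(univ.filter fun G : Ens k n => IsCutFree G.1 U) := by
        simp_rw [card_filter]
        exact sum_comm
    _ = ∑ U ∈ (univ : Finset (Fin k)).powerset, (k.choose 2 - #U * (k - #U)).descFactorial n := by
        rw [powerset_univ]
        exact sum_congr rfl fun U _ => card_filter_isCutFree U
    _ = _ := by
        rw [sum_powerset_apply_card fun u => (k.choose 2 - u * (k - u)).descFactorial n,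
          card_univ, Fintype.card_fin]
        simp only [smul_eq_mul]

end

theorem stmt10 (k n : ℕ) (hk : 2 ≤ k) (hn : n ≤ k.choose 2) :
    PU k n ≤ (1 / 2) * ∑ u ∈ Finset.range (k + 1),
        (k.choose u * (k.choose 2 - u * (k - u)).choose n : ℝ) / (k.choose 2).choose n
      - 1 := by
  have hcount := two_mul_card_ens_add_two_mul_card_disconnected_le (n := n) (by omega : 0 < k)
  simp only [card_ens, Nat.descFactorial_eq_factorial_mul_choose] at hcount
  have hcountℝ := (Nat.cast_le (α := ℝ)).2 hcount
  push_cast at hcountℝ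
  have hC : (0 : ℝ) < (k.choose 2).choose n := by exact_mod_cast Nat.choose_pos hn
  have hfac : (0 : ℝ) < n.factorial := by positivity
  rw [PU, Nat.card_eq_fintype_card, Fintype.card_subtype, Nat.card_eq_fintype_card, card_ens,
    Nat.descFactorial_eq_factorial_mul_choose, Nat.cast_mul, div_le_iff₀ (by positivity),
    ← sum_div]
  simp only [mul_left_comm _ (n.factorial : ℝ), ← mul_sum] at hcountℝ
  field_simp
  linarith
end
end

section
/- The probability that a uniformly random graph from G_{k,n} is unconnected satisfies P_U(k,n) ≥ k ( C(C(k-1,2), n) - (k-1) C(C(k-2,2), n) ) / C(C(k,2), n). -/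
/-! A graph with an isolated vertex is disconnected once `k ≥ 2`. The graphs avoiding a set `T`
of vertices are the injective labellings of the `n` edges by the `C(k - #T, 2)` pairs outside `T`,
so there are `D(k - #T)` of them, where `D(m) = C(m, 2).descFactorial n`. Bonferroni's inequality
for the events "vertex `i` is isolated", with the pair term summed over ordered pairs, bounds the
number of disconnected graphs from below by `k D(k-1) - k (k-1) D(k-2)`; dividing by the total
`D(k)` and cancelling `n!` from every `D` gives the bound. -/

open scoped Classical

noncomputable section

open Finset

lemma Finset.sum_card_eq_sum_card_filter_mem {ι α : Type*} [DecidableEq α] (s : Finset ι)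
    (A : ι → Finset α) {t : Finset α} (h : ∀ i ∈ s, A i ⊆ t) :
    ∑ i ∈ s, #(A i) = ∑ a ∈ t, #{i ∈ s | a ∈ A i} := by
  simp_rw [card_eq_sum_ones, sum_filter]
  rw [sum_comm]
  refine sum_congr rfl fun i hi => ?_
  rw [← sum_filter, filter_mem_eq_inter, inter_eq_right.2 (h i hi)]

theorem Finset.sum_card_le_card_biUnion_add_sum_card_inter {ι α : Type*} [DecidableEq ι]
    [DecidableEq α] (s : Finset ι) (A : ι → Finset α) :
    ∑ i ∈ s, #(A i) ≤ #(s.biUnion A) + ∑ p ∈ s.offDiag, #(A p.1 ∩ A p.2) := by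
  set U := s.biUnion A
  have hsub : ∀ i ∈ s, A i ⊆ U := fun i hi => subset_biUnion_of_mem A hi
  have hsingle := sum_card_eq_sum_card_filter_mem s A hsub
  have hpair := sum_card_eq_sum_card_filter_mem s.offDiag (fun p => A p.1 ∩ A p.2)
    fun p hp => inter_subset_left.trans (hsub p.1 (mem_offDiag.1 hp).1)
  have hfilter : ∀ a, ({p ∈ s.offDiag | a ∈ A p.1 ∩ A p.2} : Finset (ι × ι))
      = {i ∈ s | a ∈ A i}.offDiag := by
    intro a
    ext p
    simp only [mem_filter, mem_offDiag, mem_inter]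
    tauto
  simp_rw [hsingle, hpair, hfilter, offDiag_card, card_eq_sum_ones U, ← sum_add_distrib]
  refine sum_le_sum fun a _ => ?_
  -- an element lying in `m` of the sets: `m ≤ 1 + m (m - 1)` as `(m - 1) ^ 2 ≥ 0`
  generalize #{i ∈ s | a ∈ A i} = m
  have : m ≤ m * m := Nat.le_mul_self m
  zify [this]
  nlinarith [sq_nonneg ((m : ℤ) - 1)]

lemma Finset.card_filter_sym2_not_isDiag {α : Type*} [DecidableEq α] (S : Finset α) :
    #{x ∈ S.sym2 | ¬x.IsDiag} = (#S).choose 2 := by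
  rw [sym2_eq_image, Sym2.filter_image_mk_not_isDiag, Sym2.card_image_offDiag]

lemma SimpleGraph.not_connected_of_isIsolated {V : Type*} [Nontrivial V] {G : SimpleGraph V}
    {v : V} (hv : G.IsIsolated v) : ¬G.Connected := fun h =>
  SimpleGraph.exists_adj_iff_not_isIsolated.1 (h.preconnected.exists_adj_of_nontrivial v) hv

namespace Ens

variable {k n : ℕ}

def graphsOn (S : Finset (Fin k)) : Finset (Ens k n) := {G | ∀ j, G.1 j ∈ S.sym2}

def graphsOnEquiv (S : Finset (Fin k)) :
    graphsOn (n := n) S ≃ (Fin n ↪ ({x ∈ S.sym2 | ¬x.IsDiag} : Finset _)) where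
  toFun G := ⟨fun j => ⟨G.1.1 j, mem_filter.2 ⟨(mem_filter.1 G.2).2 j, G.1.2.2 j⟩⟩,
    fun _ _ h => G.1.2.1 (congrArg Subtype.val h)⟩
  invFun f := ⟨⟨fun j => f j, fun _ _ h => f.injective (Subtype.ext h),
    fun j => (mem_filter.1 (f j).2).2⟩,
    mem_filter.2 ⟨mem_univ _, fun j => (mem_filter.1 (f j).2).1⟩⟩
  left_inv _ := rfl
  right_inv _ := rfl

theorem card_graphsOn (S : Finset (Fin k)) :
    #(graphsOn (n := n) S) = ((#S).choose 2).descFactorial n := by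
  rw [← Fintype.card_coe, Fintype.card_congr (graphsOnEquiv S), Fintype.card_embedding_eq,
    Fintype.card_fin, Fintype.card_coe, card_filter_sym2_not_isDiag]

theorem graphsOn_inter (S T : Finset (Fin k)) :
    graphsOn (n := n) S ∩ graphsOn T = graphsOn (S ∩ T) := by
  ext G
  simp only [graphsOn, mem_inter, mem_filter, mem_univ, true_and, mem_sym2_iff, ← forall_and]

theorem card_eq_descFactorial : Nat.card (Ens k n) = (k.choose 2).descFactorial n := by
  have huniv : graphsOn (n := n) (univ : Finset (Fin k)) = univ := by
    ext G
    simp [graphsOn]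
  rw [Nat.card_eq_fintype_card, ← card_univ, ← huniv, card_graphsOn, card_univ,
    Fintype.card_fin]

theorem not_connected_of_mem_graphsOn_compl_singleton (hk : 2 ≤ k) {i : Fin k} {G : Ens k n}
    (hG : G ∈ graphsOn {i}ᶜ) : ¬(toGraph G.1).Connected := by
  have : Nontrivial (Fin k) := Fin.nontrivial_iff_two_le.2 hk
  refine SimpleGraph.not_connected_of_isIsolated (v := i) fun w hiw => ?_
  obtain ⟨⟨j, hj⟩, -⟩ := (SimpleGraph.fromEdgeSet_adj _).1 hiw
  have := mem_sym2_iff.1 ((mem_filter.1 hG).2 j) i (hj ▸ Sym2.mem_mk_left i w)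
  simp at this

theorem mul_descFactorial_le_card_not_connected_add (hk : 2 ≤ k) :
    k * ((k - 1).choose 2).descFactorial n ≤ Nat.card {G : Ens k n // ¬(toGraph G.1).Connected}
      + k * (k - 1) * ((k - 2).choose 2).descFactorial n := by
  set A : Fin k → Finset (Ens k n) := fun i => graphsOn {i}ᶜ
  have hsingle : ∀ i ∈ univ, #(A i) = ((k - 1).choose 2).descFactorial n := by
    intro i _
    rw [card_graphsOn, card_compl, card_singleton, Fintype.card_fin]
  have hpair : ∀ p ∈ (univ : Finset (Fin k)).offDiag,
      #(A p.1 ∩ A p.2) = ((k - 2).choose 2).descFactorial n := by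
    rintro ⟨i, j⟩ hij
    rw [graphsOn_inter, card_graphsOn, ← compl_union, card_compl, Fintype.card_fin,
      singleton_union, card_pair (mem_offDiag.1 hij).2.2]
  have hunion : #(univ.biUnion A) ≤ Nat.card {G : Ens k n // ¬(toGraph G.1).Connected} := by
    rw [Nat.card_eq_fintype_card, Fintype.card_subtype]
    refine card_le_card fun G hG => mem_filter.2 ⟨mem_univ G, ?_⟩
    obtain ⟨i, -, hi⟩ := mem_biUnion.1 hG
    exact not_connected_of_mem_graphsOn_compl_singleton hk hi
  have hbonf := sum_card_le_card_biUnion_add_sum_card_inter univ A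
  rw [sum_congr rfl hsingle, sum_congr rfl hpair, sum_const, sum_const, offDiag_card, card_univ,
    Fintype.card_fin, ← Nat.mul_sub_one, smul_eq_mul, smul_eq_mul] at hbonf
  exact hbonf.trans (Nat.add_le_add_right hunion _)

end Ens

theorem stmt12 (k n : ℕ) (hk : 2 ≤ k) :
    PU k n ≥ (k : ℝ) * ((((k - 1).choose 2).choose n : ℝ)
        - ((k - 1 : ℕ) : ℝ) * (((k - 2).choose 2).choose n : ℝ)) / (k.choose 2).choose n := by
  have hcount : (k : ℝ) * (((k - 1).choose 2).descFactorial n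
      - ((k - 1 : ℕ) : ℝ) * ((k - 2).choose 2).descFactorial n)
      ≤ Nat.card {G : Ens k n // ¬(toGraph G.1).Connected} := by
    have h := Ens.mul_descFactorial_le_card_not_connected_add (n := n) hk
    have := (Nat.cast_le (α := ℝ)).2 h
    push_cast at this
    linarith
  have hfact : (n.factorial : ℝ) ≠ 0 := by positivity
  have hchoose : ∀ m : ℕ, (m.choose n : ℝ) = m.descFactorial n / n.factorial := fun m => by
    rw [Nat.descFactorial_eq_factorial_mul_choose, Nat.cast_mul, mul_div_cancel_left₀ _ hfact]
  rw [PU, Ens.card_eq_descFactorial, hchoose, hchoose, hchoose, ge_iff_le]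
  calc _ = (k : ℝ) * (((k - 1).choose 2).descFactorial n
        - ((k - 1 : ℕ) : ℝ) * ((k - 2).choose 2).descFactorial n)
        / (k.choose 2).descFactorial n := by
        field_simp
    _ ≤ _ := div_le_div_of_nonneg_right hcount (Nat.cast_nonneg _)
end
end

section
/- For the uniform ensemble G_{k,n} with edge failure probability ε ∈ (0,1), E[P_f(G,ε)] ≤ (1/(2 C(C(k,2),n))) Σ_{v=1}^{n} Σ_{u=0}^{k} C(k,u) C(u(k-u),v) C(C(k,2)-u(k-u), n-v) ε^v + (1/(2 C(C(k,2),n))) Σ_{u=0}^{k} C(k,u) C(C(k,2)-u(k-u), n) - 1. -/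
open scoped Classical

noncomputable section

/-!
A vertex set `V` determines the cut-set `cutEdges e V` of edges crossing it, and `Vᶜ` determines
the same one. If the survivor graph after the edges `E'` fail is disconnected, the vertices
reachable from some `x` form a proper `V` such that the cut-sets of both `V` and `Vᶜ` lie inside
`E'`. As all edges of a fixed set `C` fail with probability `ε ^ #C`, this gives
`P_f ≤ ½ ∑_{V proper} ε ^ #(cutEdges e V)`, also for an unconnected graph, where every survivor
is disconnected and `P_f = 1`. The two trivial cuts `∅` and `univ` have empty cut-sets, so
`P_f ≤ ½ ∑_V ε ^ #(cutEdges e V) - 1`.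

Over the ensemble the edge set is a uniform `n`-subset of the `C(k, 2)` pairs, of which
`#V * (k - #V)` cross `V`, so the number of crossing edges is hypergeometric. Grouping the `V` by
size gives the factors `C(k, u)`, and the terms with no crossing edge form the second sum.
-/

open Finset

section Combinatorics

variable {α : Type*} [DecidableEq α]

lemma sum_superset_pow_mul_pow [Fintype α] {R : Type*} [CommRing R] (C : Finset α) (p : R) :
    ∑ E : Finset α, (if C ⊆ E then p ^ #E * (1 - p) ^ (Fintype.card α - #E) else 0)
      = p ^ #C := by
  have key := Fintype.prod_add (fun _ : α => p) (fun a => if a ∉ C then 1 - p else 0)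
  rw [show ∏ a : α, (p + if a ∉ C then 1 - p else 0) = p ^ #C by
    simp [apply_ite (p + ·), Finset.prod_ite_mem]] at key
  rw [key]
  refine Fintype.sum_congr _ _ fun E => ?_
  have hC : (∀ a ∈ Eᶜ, a ∉ C) ↔ C ⊆ E := by
    simp only [mem_compl]
    exact ⟨fun h a ha => by_contra fun hE => h a hE ha, fun h a hE ha => hE (h ha)⟩
  simp only [prod_ite_zero, hC, prod_const, card_compl]
  split_ifs <;> simp

lemma card_powersetCard_filter_card_inter {U A : Finset α} (hA : A ⊆ U) {N v : ℕ}
    (hv : v ≤ N) :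
    #{S ∈ U.powersetCard N | #(S ∩ A) = v} = (#A).choose v * (#(U \ A)).choose (N - v) := by
  rw [← card_powersetCard, ← card_powersetCard, ← card_product]
  refine card_nbij' (fun S => (S ∩ A, S \ A)) (fun p => p.1 ∪ p.2) ?_ ?_ ?_ ?_
  · intro S hS
    simp only [coe_filter, mem_powersetCard, Set.mem_ofPred_eq] at hS
    obtain ⟨⟨hSU, hSN⟩, hSv⟩ := hS
    simp only [coe_product, Set.mem_prod, mem_coe, mem_powersetCard]
    refine ⟨⟨inter_subset_right, hSv⟩, sdiff_subset_sdiff hSU le_rfl, ?_⟩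
    rw [← hSN, ← hSv, ← card_sdiff_add_card_inter S A]
    omega
  · rintro ⟨B, D⟩ h
    simp only [coe_product, Set.mem_prod, mem_coe, mem_powersetCard, subset_sdiff] at h
    obtain ⟨⟨hBA, hB⟩, ⟨hDU, hDA⟩, hD⟩ := h
    have hinter : (B ∪ D) ∩ A = B := by
      rw [union_inter_distrib_right, inter_eq_left.2 hBA,
        disjoint_iff_inter_eq_empty.1 hDA, union_empty]
    simp only [coe_filter, mem_powersetCard, Set.mem_ofPred_eq, hinter, hB, and_true]
    refine ⟨union_subset (hBA.trans hA) hDU, ?_⟩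
    rw [card_union_of_disjoint (disjoint_of_subset_left hBA hDA.symm)]
    omega
  · intro S _
    exact sup_inf_sdiff S A
  · rintro ⟨B, D⟩ h
    simp only [coe_product, Set.mem_prod, mem_coe, mem_powersetCard, subset_sdiff] at h
    obtain ⟨⟨hBA, -⟩, ⟨-, hDA⟩, -⟩ := h
    rw [disjoint_left] at hDA
    ext x <;> simp only [mem_inter, mem_union, mem_sdiff] <;> grind

lemma sum_powersetCard_apply_card_inter {M : Type*} [AddCommMonoid M] {U A : Finset α}
    (hA : A ⊆ U) (N : ℕ) (f : ℕ → M) :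
    ∑ S ∈ U.powersetCard N, f #(S ∩ A)
      = ∑ v ∈ range (N + 1), ((#A).choose v * (#(U \ A)).choose (N - v)) • f v := by
  rw [← sum_fiberwise_of_maps_to (t := range (N + 1)) (g := fun S => #(S ∩ A)) fun S hS =>
    mem_range_succ_iff.2 ((card_le_card inter_subset_left).trans (mem_powersetCard.1 hS).2.le)]
  refine sum_congr rfl fun v hv => ?_
  rw [sum_congr rfl fun S hS => congrArg f (mem_filter.1 hS).2, sum_const,
    card_powersetCard_filter_card_inter hA (mem_range_succ_iff.1 hv)]

end Combinatorics

namespace Ens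

variable {k n : ℕ}

def edges (G : Ens k n) : Finset (Sym2 (Fin k)) :=
  univ.map ⟨G.1, G.2.1⟩

lemma apply_mem_edges (G : Ens k n) (j : Fin n) : G.1 j ∈ G.edges :=
  mem_map_of_mem _ (mem_univ j)

lemma edges_mem_powersetCard (G : Ens k n) :
    G.edges ∈ (⊤ : SimpleGraph (Fin k)).edgeFinset.powersetCard n := by
  refine mem_powersetCard.2 ⟨fun s hs => ?_, by simp [edges]⟩
  obtain ⟨j, -, rfl⟩ := mem_map.1 hs
  simpa using G.2.2 j

def equivOfEdgesEq (S : Finset (Sym2 (Fin k)))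
    (hS : S ∈ (⊤ : SimpleGraph (Fin k)).edgeFinset.powersetCard n) :
    {G : Ens k n // G.edges = S} ≃ (Fin n ≃ S) where
  toFun G := Equiv.ofBijective
      (fun j => ⟨G.1.1 j, congrArg (G.1.1 j ∈ ·) G.2 ▸ apply_mem_edges G.1 j⟩) <| by
    rw [Fintype.bijective_iff_injective_and_card, Fintype.card_coe, (mem_powersetCard.1 hS).2,
      Fintype.card_fin]
    exact ⟨fun i j h => G.1.2.1 (congrArg Subtype.val h), rfl⟩
  invFun σ := ⟨⟨fun j => σ j, fun i j h => σ.injective (Subtype.ext h),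
      fun j => by simpa using (mem_powersetCard.1 hS).1 (σ j).2⟩, by
    ext s
    simp only [edges, mem_map, mem_univ, true_and, Function.Embedding.coeFn_mk]
    exact ⟨by rintro ⟨j, rfl⟩; exact (σ j).2,
      fun hs => ⟨σ.symm ⟨s, hs⟩, by simp⟩⟩⟩
  left_inv G := rfl
  right_inv σ := by ext; rfl

lemma card_filter_edges_eq {S : Finset (Sym2 (Fin k))}
    (hS : S ∈ (⊤ : SimpleGraph (Fin k)).edgeFinset.powersetCard n) :
    #{G : Ens k n | G.edges = S} = n.factorial := by
  rw [← Fintype.card_subtype, Fintype.card_congr (equivOfEdgesEq S hS),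
    Fintype.card_equiv (Fintype.equivOfCardEq _), Fintype.card_fin]
  simpa using (mem_powersetCard.1 hS).2.symm

lemma sum_apply_edges {M : Type*} [AddCommMonoid M] (φ : Finset (Sym2 (Fin k)) → M) :
    ∑ G : Ens k n, φ G.edges
      = ∑ S ∈ (⊤ : SimpleGraph (Fin k)).edgeFinset.powersetCard n, n.factorial • φ S := by
  rw [← sum_fiberwise_of_maps_to fun G _ => edges_mem_powersetCard G]
  refine sum_congr rfl fun S hS => ?_
  rw [sum_congr rfl fun G hG => congrArg φ (mem_filter.1 hG).2, sum_const,
    card_filter_edges_eq hS]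

lemma card_eq : Fintype.card (Ens k n) = n.factorial * (k.choose 2).choose n := by
  have h := sum_apply_edges (k := k) (n := n) fun _ => 1
  rw [sum_const, sum_const, card_powersetCard,
    SimpleGraph.card_edgeFinset_top_eq_card_choose_two] at h
  simpa [mul_comm] using h

end Ens

section Cuts

variable {k n : ℕ}

lemma crosses_mk_iff {V : Finset (Fin k)} {a b : Fin k} :
    crosses V s(a, b) ↔ (a ∈ V ↔ b ∉ V) := by
  constructor
  · rintro ⟨c, d, h, hc, hd⟩
    rcases Sym2.eq_iff.1 h with ⟨rfl, rfl⟩ | ⟨rfl, rfl⟩ <;> tauto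
  · intro h
    by_cases ha : a ∈ V
    · exact ⟨a, b, rfl, ha, h.1 ha⟩
    · exact ⟨b, a, Sym2.eq_swap, not_not.1 (mt h.2 ha), ha⟩

lemma crosses_compl {V : Finset (Fin k)} {s : Sym2 (Fin k)} :
    crosses Vᶜ s ↔ crosses V s := by
  induction s using Sym2.ind with
  | _ a b => simp only [crosses_mk_iff, mem_compl]; tauto

lemma not_crosses_univ {s : Sym2 (Fin k)} : ¬ crosses univ s := by
  rintro ⟨a, b, -, -, hb⟩
  exact hb (mem_univ b)

lemma not_crosses_empty {s : Sym2 (Fin k)} : ¬ crosses ∅ s := by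
  rw [← compl_univ, crosses_compl]
  exact not_crosses_univ

def crossingPairs (V : Finset (Fin k)) : Finset (Sym2 (Fin k)) := {s | crosses V s}

lemma crossingPairs_subset (V : Finset (Fin k)) :
    crossingPairs V ⊆ (⊤ : SimpleGraph (Fin k)).edgeFinset := by
  intro s hs
  obtain ⟨a, b, rfl, ha, hb⟩ := (mem_filter.1 hs).2
  simpa using fun h : a = b => hb (h ▸ ha)

lemma card_crossingPairs (V : Finset (Fin k)) : #(crossingPairs V) = #V * (k - #V) := by
  have hk : k - #V = #Vᶜ := by rw [card_compl, Fintype.card_fin]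
  rw [hk, ← card_product]
  symm
  refine card_nbij (fun p => s(p.1, p.2)) (fun p hp => ?_) (fun p hp q hq h => ?_) (fun s hs => ?_)
  · simp only [coe_product, Set.mem_prod, mem_coe, mem_compl] at hp
    exact mem_filter.2 ⟨mem_univ _, p.1, p.2, rfl, hp⟩
  · simp only [coe_product, Set.mem_prod, mem_coe, mem_compl] at hp hq
    rcases Sym2.eq_iff.1 h with ⟨h1, h2⟩ | ⟨h1, -⟩
    · exact Prod.ext h1 h2
    · exact absurd (h1 ▸ hp.1) hq.2
  · obtain ⟨a, b, rfl, ha, hb⟩ := (mem_filter.1 hs).2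
    exact ⟨(a, b), by simpa using ⟨ha, hb⟩, rfl⟩

def cutEdges (e : Fin n → Sym2 (Fin k)) (V : Finset (Fin k)) : Finset (Fin n) :=
  {j | crosses V (e j)}

lemma cutEdges_compl (e : Fin n → Sym2 (Fin k)) (V : Finset (Fin k)) :
    cutEdges e Vᶜ = cutEdges e V := by
  simp only [cutEdges, crosses_compl]

lemma cutEdges_univ (e : Fin n → Sym2 (Fin k)) : cutEdges e univ = ∅ := by
  simp [cutEdges, not_crosses_univ]

lemma cutEdges_empty (e : Fin n → Sym2 (Fin k)) : cutEdges e ∅ = ∅ := by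
  simp [cutEdges, not_crosses_empty]

lemma Ens.card_cutEdges (G : Ens k n) (V : Finset (Fin k)) :
    #(cutEdges G.1 V) = #(G.edges ∩ crossingPairs V) := by
  rw [inter_comm, crossingPairs, filter_inter, univ_inter, Ens.edges, filter_map, card_map]
  rfl

lemma Ens.sum_pow_card_cutEdges {R : Type*} [CommSemiring R] (V : Finset (Fin k)) (x : R) :
    ∑ G : Ens k n, x ^ #(cutEdges G.1 V)
      = n.factorial • ∑ v ∈ range (n + 1),
          ((#V * (k - #V)).choose v * (k.choose 2 - #V * (k - #V)).choose (n - v)) • x ^ v := by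
  simp_rw [Ens.card_cutEdges]
  rw [Ens.sum_apply_edges (fun S => x ^ #(S ∩ crossingPairs V)), ← smul_sum,
    sum_powersetCard_apply_card_inter (crossingPairs_subset V),
    card_sdiff_of_subset (crossingPairs_subset V), card_crossingPairs,
    SimpleGraph.card_edgeFinset_top_eq_card_choose_two, Fintype.card_fin]

end Cuts

lemma SimpleGraph.exists_separating_finset_of_not_reachable {α : Type*} [Fintype α]
    [DecidableEq α] (H : SimpleGraph α) {x y : α} (hxy : ¬ H.Reachable x y) :
    ∃ V : Finset α, x ∈ V ∧ y ∉ V ∧ ∀ a b, H.Adj a b → (a ∈ V ↔ b ∈ V) := by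
  refine ⟨({z | H.Reachable x z} : Finset α), by simp, by simpa using hxy, fun a b hab => ?_⟩
  simp only [mem_filter, mem_univ, true_and]
  exact ⟨fun h => h.trans hab.reachable, fun h => h.trans hab.symm.reachable⟩

section FailureProbability

variable {k n : ℕ}

lemma cutEdges_subset_of_adj_iff {e : Fin n → Sym2 (Fin k)} {E' : Finset (Fin n)}
    {V : Finset (Fin k)} (hV : ∀ a b, (survivor e E').Adj a b → (a ∈ V ↔ b ∈ V)) :
    cutEdges e V ⊆ E' := by
  intro j hj
  by_contra hjE
  obtain ⟨a, b, hab, ha, hb⟩ := (mem_filter.1 hj).2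
  have hadj : (survivor e E').Adj a b := by
    rw [survivor, SimpleGraph.fromEdgeSet_adj]
    exact ⟨⟨j, hjE, hab⟩, fun h => hb (h ▸ ha)⟩
  exact hb ((hV a b hadj).1 ha)

def properCuts (k : ℕ) : Finset (Finset (Fin k)) := univ \ {∅, univ}

lemma mem_properCuts_of_mem_of_notMem {W : Finset (Fin k)} {x y : Fin k} (hx : x ∈ W)
    (hy : y ∉ W) : W ∈ properCuts k := by
  simp only [properCuts, mem_sdiff, mem_univ, mem_insert, mem_singleton, true_and, not_or]
  exact ⟨ne_empty_of_mem hx, fun h => hy (h ▸ mem_univ y)⟩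

lemma two_le_card_properCuts_cutEdges_subset [Nonempty (Fin k)] {e : Fin n → Sym2 (Fin k)}
    {E' : Finset (Fin n)} (h : ¬ (survivor e E').Connected) :
    2 ≤ #{V ∈ properCuts k | cutEdges e V ⊆ E'} := by
  rw [SimpleGraph.connected_iff, and_iff_left ‹_›, SimpleGraph.Preconnected] at h
  push Not at h
  obtain ⟨x, y, hxy⟩ := h
  obtain ⟨V, hx, hy, hV⟩ := (survivor e E').exists_separating_finset_of_not_reachable hxy
  have hcut : cutEdges e V ⊆ E' := cutEdges_subset_of_adj_iff hV
  have hsub : {V, Vᶜ} ⊆ {V ∈ properCuts k | cutEdges e V ⊆ E'} := by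
    intro W hW
    rcases mem_insert.1 hW with rfl | hW
    · exact mem_filter.2 ⟨mem_properCuts_of_mem_of_notMem hx hy, hcut⟩
    · rw [mem_singleton.1 hW]
      exact mem_filter.2 ⟨mem_properCuts_of_mem_of_notMem (mem_compl.2 hy)
        (fun h => mem_compl.1 h hx), by rwa [cutEdges_compl]⟩
  calc 2 = #{V, Vᶜ} := (card_pair fun h => mem_compl.1 (h ▸ hx) hx).symm
    _ ≤ _ := card_le_card hsub

lemma Pf_le_half_sum_properCuts [Nonempty (Fin k)] (e : Fin n → Sym2 (Fin k)) {ε : ℝ}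
    (h0 : 0 ≤ ε) (h1 : ε ≤ 1) :
    Pf e ε ≤ (∑ V ∈ properCuts k, ε ^ #(cutEdges e V)) / 2 := by
  set w : Finset (Fin n) → ℝ := fun E' => ε ^ #E' * (1 - ε) ^ (n - #E')
  have hw : ∀ E', 0 ≤ w E' := fun E' =>
    mul_nonneg (pow_nonneg h0 _) (pow_nonneg (sub_nonneg.2 h1) _)
  have hpt : ∀ E', (if ¬ (survivor e E').Connected then w E' else 0)
      ≤ (∑ V ∈ properCuts k, if cutEdges e V ⊆ E' then w E' else 0) / 2 := fun E' => by
    rw [← sum_filter, sum_const, nsmul_eq_mul]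
    split_ifs with h
    · have := hw E'
      positivity
    · have h2 : (2 : ℝ) ≤ #{V ∈ properCuts k | cutEdges e V ⊆ E'} := by
        exact_mod_cast two_le_card_properCuts_cutEdges_subset h
      nlinarith [hw E']
  calc Pf e ε ≤ ∑ E', (∑ V ∈ properCuts k, if cutEdges e V ⊆ E' then w E' else 0) / 2 :=
        sum_le_sum fun E' _ => hpt E'
    _ = (∑ V ∈ properCuts k, ∑ E', if cutEdges e V ⊆ E' then w E' else 0) / 2 := by
        rw [← sum_div, sum_comm]
    _ = _ := by
        congr 1
        refine sum_congr rfl fun V _ => ?_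
        simpa using sum_superset_pow_mul_pow (cutEdges e V) ε

lemma Pf_eq_one_of_not_connected {e : Fin n → Sym2 (Fin k)} (h : ¬ (toGraph e).Connected)
    (ε : ℝ) : Pf e ε = 1 := by
  have hsurv : ∀ E', ¬ (survivor e E').Connected := fun E' hE' =>
    h (hE'.mono (SimpleGraph.fromEdgeSet_mono (Set.image_subset_range _ _)))
  simpa [Pf, hsurv] using sum_superset_pow_mul_pow (∅ : Finset (Fin n)) ε

lemma PfFull_eq_Pf (e : Fin n → Sym2 (Fin k)) (ε : ℝ) : PfFull e ε = Pf e ε := by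
  unfold PfFull
  split_ifs with h
  · rfl
  · exact (Pf_eq_one_of_not_connected h ε).symm

lemma sum_pow_card_cutEdges_eq [Nonempty (Fin k)] (e : Fin n → Sym2 (Fin k)) (ε : ℝ) :
    ∑ V, ε ^ #(cutEdges e V) = ∑ V ∈ properCuts k, ε ^ #(cutEdges e V) + 2 := by
  rw [properCuts, ← sum_sdiff (subset_univ {∅, univ}), sum_pair (univ_neq_empty (Fin k)).symm,
    cutEdges_empty, cutEdges_univ]
  norm_num

lemma PfFull_le [Nonempty (Fin k)] (e : Fin n → Sym2 (Fin k)) {ε : ℝ} (h0 : 0 ≤ ε)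
    (h1 : ε ≤ 1) : PfFull e ε ≤ (∑ V, ε ^ #(cutEdges e V)) / 2 - 1 := by
  rw [PfFull_eq_Pf, sum_pow_card_cutEdges_eq]
  linarith [Pf_le_half_sum_properCuts e h0 h1]


lemma Ens.sum_PfFull_le [Nonempty (Fin k)] {ε : ℝ} (h0 : 0 ≤ ε) (h1 : ε ≤ 1) :
    ∑ G : Ens k n, PfFull G.1 ε
      ≤ (∑ G : Ens k n, ∑ V, ε ^ #(cutEdges G.1 V)) / 2 - Fintype.card (Ens k n) := by
  calc ∑ G : Ens k n, PfFull G.1 ε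
        ≤ ∑ G : Ens k n, ((∑ V, ε ^ #(cutEdges G.1 V)) / 2 - 1) :=
          sum_le_sum fun G _ => PfFull_le G.1 h0 h1
    _ = _ := by rw [sum_sub_distrib, ← sum_div, sum_const, card_univ, nsmul_one]

end FailureProbability

lemma Ens.sum_sum_pow_card_cutEdges {k n : ℕ} {R : Type*} [CommSemiring R] (x : R) :
    ∑ G : Ens k n, ∑ V, x ^ #(cutEdges G.1 V)
      = n.factorial * ∑ v ∈ range (n + 1), ∑ u ∈ range (k + 1),
          (k.choose u * (u * (k - u)).choose v * (k.choose 2 - u * (k - u)).choose (n - v) : R)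
            * x ^ v := by
  rw [sum_comm]
  simp_rw [Ens.sum_pow_card_cutEdges]
  rw [← smul_sum, ← powerset_univ, sum_powerset_apply_card
    (fun u => ∑ v ∈ range (n + 1),
      ((u * (k - u)).choose v * (k.choose 2 - u * (k - u)).choose (n - v)) • x ^ v),
    card_univ, Fintype.card_fin]
  simp only [smul_sum, nsmul_eq_mul, Nat.cast_mul, mul_sum, mul_assoc]
  exact sum_comm

theorem stmt18_general (k n : ℕ) (hk : 2 ≤ k) (hn : n ≤ k.choose 2)
    (ε : ℝ) (h0 : 0 < ε) (h1 : ε < 1) :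
    (∑ G : Ens k n, PfFull G.1 ε) / Nat.card (Ens k n)
      ≤ (1 / (2 * ((k.choose 2).choose n : ℝ))) *
          ∑ v ∈ Finset.Icc 1 n, ∑ u ∈ Finset.range (k + 1),
            (k.choose u * (u * (k - u)).choose v
              * (k.choose 2 - u * (k - u)).choose (n - v) : ℝ) * ε ^ v
        + (1 / (2 * ((k.choose 2).choose n : ℝ))) *
            ∑ u ∈ Finset.range (k + 1),
              (k.choose u * (k.choose 2 - u * (k - u)).choose n : ℝ)
        - 1 := by
  have : Nonempty (Fin k) := ⟨⟨0, by omega⟩⟩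
  have hC : (0 : ℝ) < (k.choose 2).choose n := by exact_mod_cast Nat.choose_pos hn
  have halg : ∀ a b : ℝ, (n.factorial * (b + a) / 2 - (n.factorial * (k.choose 2).choose n : ℕ))
      / (n.factorial * (k.choose 2).choose n : ℕ)
      = 1 / (2 * ((k.choose 2).choose n : ℝ)) * a
        + 1 / (2 * ((k.choose 2).choose n : ℝ)) * b - 1 := fun a b => by
    push_cast
    field_simp
    ring
  calc (∑ G : Ens k n, PfFull G.1 ε) / Nat.card (Ens k n)
      ≤ ((∑ G : Ens k n, ∑ V, ε ^ #(cutEdges G.1 V)) / 2 - Fintype.card (Ens k n))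
          / Fintype.card (Ens k n) := by
        rw [Nat.card_eq_fintype_card]
        exact div_le_div_of_nonneg_right (Ens.sum_PfFull_le h0.le h1.le) (Nat.cast_nonneg _)
    _ = _ := by
      rw [Ens.sum_sum_pow_card_cutEdges, Ens.card_eq, sum_range_eq_add_Ico _ n.add_one_pos,
        Ico_add_one_right_eq_Icc]
      simp only [Nat.choose_zero_right, Nat.sub_zero, pow_zero, mul_one, Nat.cast_one]
      exact halg _ _

theorem stmt18 (k n : ℕ) (hk : 2 ≤ k) (hn1 : 1 ≤ n) (hn : n ≤ k.choose 2)
    (ε : ℝ) (h0 : 0 < ε) (h1 : ε < 1) :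
    (∑ G : Ens k n, PfFull G.1 ε) / Nat.card (Ens k n)
      ≤ (1 / (2 * ((k.choose 2).choose n : ℝ))) *
          ∑ v ∈ Finset.Icc 1 n, ∑ u ∈ Finset.range (k + 1),
            (k.choose u * (u * (k - u)).choose v
              * (k.choose 2 - u * (k - u)).choose (n - v) : ℝ) * ε ^ v
        + (1 / (2 * ((k.choose 2).choose n : ℝ))) *
            ∑ u ∈ Finset.range (k + 1),
              (k.choose u * (k.choose 2 - u * (k - u)).choose n : ℝ)
        - 1 :=
  stmt18_general k n hk hn ε h0 h1
end
end
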